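/- arXiv:2004.12199 — 2 statements merged into one kernel-verified Lean document; each statement's English description precedes it below -/
import Mathlib

section
/- The optimal value of the augmented minimum-cost flow problem equals |S| − 2·(minimum of the nLasso objective h). Precisely: the minimum, over all pairs (y, u) where y : E → ℝ satisfies |y_e| ≤ λ W_e for every e ∈ E and u : V → ℝ satisfies the conservation constraint u_i = div_i(y) for every i ∈ V, of Σ_{i∈S} (u_i − 1)² + (1/α) Σ_{i∉S} u_i², equals |S| − 2 · min_{x:V→ℝ} h(x). -/
open Finset

/-- Total variation of a graph signal `x` w.r.t. oriented edge set `E` and weights `W`. -/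
noncomputable def TV {n : ℕ} (E : Finset (Fin n × Fin n)) (W : Fin n × Fin n → ℝ)
    (x : Fin n → ℝ) : ℝ :=
  ∑ e ∈ E, W e * |x e.1 - x e.2|

/-- The network Lasso objective. -/
noncomputable def nLasso {n : ℕ} (E : Finset (Fin n × Fin n)) (W : Fin n × Fin n → ℝ)
    (S : Finset (Fin n)) (α lam : ℝ) (x : Fin n → ℝ) : ℝ :=
  ∑ i ∈ S, (x i - 1) ^ 2 / 2 + ∑ i ∈ Sᶜ, α * x i ^ 2 / 2 + lam * TV E W x

/-- Divergence of the flow `y` at node `i`: outgoing minus incoming flow. -/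
noncomputable def divg {n : ℕ} (E : Finset (Fin n × Fin n)) (y : Fin n × Fin n → ℝ)
    (i : Fin n) : ℝ :=
  ∑ e ∈ E.filter (fun e => e.1 = i), y e - ∑ e ∈ E.filter (fun e => e.2 = i), y e

/-- The dual (flow) objective of the network Lasso. -/
noncomputable def dualObj {n : ℕ} (E : Finset (Fin n × Fin n)) (S : Finset (Fin n))
    (α : ℝ) (y : Fin n × Fin n → ℝ) : ℝ :=
  -∑ i ∈ S, (divg E y i ^ 2 / 2 - divg E y i) - ∑ i ∈ Sᶜ, divg E y i ^ 2 / (2 * α)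

/-- The boundary of a node set `C`: edges with exactly one endpoint in `C`. -/
def bdry {n : ℕ} (E : Finset (Fin n × Fin n)) (C : Finset (Fin n)) :
    Finset (Fin n × Fin n) :=
  E.filter (fun e => (e.1 ∈ C ∧ e.2 ∉ C) ∨ (e.1 ∉ C ∧ e.2 ∈ C))

/-! For `u = div y` and any signal `x`, the flow cost equals `|S| - 2 h(x)` plus a duality gap:
two sums of squares and the edge terms `λ W_e |x_i - x_j| - y_e (x_i - x_j)`, which are
nonnegative as soon as `|y_e| ≤ λ W_e` (summation by parts turns `∑ u_i x_i` into
`∑_e y_e (x_i - x_j)`). This is weak duality. A minimizing flow `ŷ` exists by compactness of the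
capacity box. Taking `x̂ = -½ ∇(flow cost)(div ŷ)` makes the squares vanish, and minimality of `ŷ`
along each single edge coordinate forces `ŷ_e = ± λ W_e` whenever `x̂_i ≠ x̂_j`, so the gap is zero
at `(ŷ, x̂)`: `x̂` minimizes `h` and the minimum flow cost is `|S| - 2 h(x̂)`. -/

section Divergence

variable {n : ℕ} (E : Finset (Fin n × Fin n))

theorem sum_divg_mul (y : Fin n × Fin n → ℝ) (x : Fin n → ℝ) :
    ∑ i, divg E y i * x i = ∑ e ∈ E, y e * (x e.1 - x e.2) := by
  have fiber (p : Fin n × Fin n → Fin n) :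
      ∑ i, (∑ e ∈ E.filter (fun e => p e = i), y e) * x i = ∑ e ∈ E, y e * x (p e) := by
    rw [← sum_fiberwise E p (fun e => y e * x (p e))]
    refine sum_congr rfl fun i _ => ?_
    rw [sum_mul]
    exact sum_congr rfl fun e he => by rw [(mem_filter.mp he).2]
  simp only [divg, sub_mul, sum_sub_distrib, fiber, mul_sub]

theorem divg_congr {y y' : Fin n × Fin n → ℝ} (h : ∀ e ∈ E, y e = y' e) :
    divg E y = divg E y' := by
  ext i
  unfold divg
  rw [sum_congr rfl fun e he => h e (mem_filter.mp he).1,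
    sum_congr rfl fun e he => h e (mem_filter.mp he).1]

theorem divg_add_smul (y v : Fin n × Fin n → ℝ) (t : ℝ) :
    divg E (y + t • v) = divg E y + t • divg E v := by
  ext i
  simp only [divg, Pi.add_apply, Pi.smul_apply, smul_eq_mul, sum_add_distrib, ← mul_sum]
  ring

theorem continuous_divg : Continuous (divg E) := by
  unfold divg
  fun_prop

end Divergence

section FlowCost

variable {V : Type*} [Fintype V] [DecidableEq V] (S : Finset V) (α : ℝ)

noncomputable def flowCost (u : V → ℝ) : ℝ :=
  ∑ i ∈ S, (u i - 1) ^ 2 + (1 / α) * ∑ i ∈ Sᶜ, u i ^ 2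

/-- `-½` times the gradient of `flowCost S α` at `u`. -/
noncomputable def primalOfFlow (u : V → ℝ) : V → ℝ :=
  fun i => if i ∈ S then 1 - u i else -u i / α

theorem flowCost_add_smul (u v : V → ℝ) (t : ℝ) :
    flowCost S α (u + t • v) = flowCost S α u - 2 * t * ∑ i, primalOfFlow S α u i * v i
      + t ^ 2 * (∑ i ∈ S, v i ^ 2 + 1 / α * ∑ i ∈ Sᶜ, v i ^ 2) := by
  have hS : ∑ i ∈ S, (u i + t * v i - 1) ^ 2 = ∑ i ∈ S, (u i - 1) ^ 2
      - 2 * t * ∑ i ∈ S, primalOfFlow S α u i * v i + t ^ 2 * ∑ i ∈ S, v i ^ 2 := by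
    simp only [mul_sum, ← sum_sub_distrib, ← sum_add_distrib]
    exact sum_congr rfl fun i hi => by simp only [primalOfFlow, if_pos hi]; ring
  have hSc : 1 / α * ∑ i ∈ Sᶜ, (u i + t * v i) ^ 2 = 1 / α * ∑ i ∈ Sᶜ, u i ^ 2
      - 2 * t * ∑ i ∈ Sᶜ, primalOfFlow S α u i * v i + t ^ 2 * (1 / α * ∑ i ∈ Sᶜ, v i ^ 2) := by
    simp only [mul_sum, ← sum_sub_distrib, ← sum_add_distrib]
    refine sum_congr rfl fun i hi => ?_
    simp only [primalOfFlow, if_neg (mem_compl.mp hi)]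
    ring
  simp only [flowCost, Pi.add_apply, Pi.smul_apply, smul_eq_mul]
  rw [← sum_add_sum_compl S, hS, hSc]
  ring

theorem continuous_flowCost : Continuous (flowCost S α) := by
  unfold flowCost
  fun_prop

end FlowCost

def feasibleFlows {ι : Type*} (E : Finset ι) (c : ι → ℝ) : Set (ι → ℝ) :=
  {y | ∀ e ∈ E, |y e| ≤ c e}

theorem exists_isMinOn_feasibleFlows {ι : Type*} {E : Finset ι} {c : ι → ℝ}
    (hc : ∀ e ∈ E, 0 ≤ c e) {f : (ι → ℝ) → ℝ} (hf : Continuous f)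
    (hfE : ∀ y y', (∀ e ∈ E, y e = y' e) → f y = f y') :
    ∃ y ∈ feasibleFlows E c, IsMinOn f (feasibleFlows E c) y := by
  classical
  set b : ι → ℝ := fun e => if e ∈ E then c e else 0
  have hb : ∀ e, 0 ≤ b e := fun e => by unfold b; split_ifs with he; exacts [hc e he, le_rfl]
  set K := Set.univ.pi fun e => Set.Icc (-b e) (b e)
  have hKsub : K ⊆ feasibleFlows E c := fun y hy e he => by
    simpa [b, he, abs_le] using hy e (Set.mem_univ e)
  have hK : IsCompact K := isCompact_univ_pi fun _ => isCompact_Icc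
  obtain ⟨y, hyK, hmin⟩ := hK.exists_isMinOn ⟨0, fun e _ => by simp [hb e]⟩ hf.continuousOn
  refine ⟨y, hKsub hyK, fun y' hy' => ?_⟩
  -- truncating `y'` to zero off `E` lands in `K` without changing `f`
  set y'' : ι → ℝ := fun e => if e ∈ E then y' e else 0
  have hy''K : y'' ∈ K := fun e _ => by
    by_cases he : e ∈ E
    · simpa [y'', b, he, abs_le] using hy' e he
    · simp [y'', b, he]
  show f y ≤ f y'
  exact (hmin hy''K).trans_eq (hfE _ _ fun e he => if_pos he)

theorem eq_of_forall_step_le {v L d C : ℝ} (hd : 0 < d) (hv : v ≤ L)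
    (h : ∀ t, 0 < t → v + t ≤ L → 2 * t * d ≤ C * t ^ 2) : v = L := by
  by_contra hne
  set t := min (L - v) (d / (|C| + 1))
  have ht : 0 < t := lt_min (by linarith [lt_of_le_of_ne hv hne]) (by positivity)
  have htd : t * (|C| + 1) ≤ d := (le_div_iff₀ (by positivity)).mp (min_le_right _ _)
  nlinarith [h t ht (by linarith [min_le_left (L - v) (d / (|C| + 1))]), le_abs_self C]

theorem mul_eq_mul_abs_of_forall_step_le {v L d C : ℝ} (hv : |v| ≤ L)
    (h : ∀ t, |v + t| ≤ L → 2 * t * d ≤ C * t ^ 2) : v * d = L * |d| := by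
  obtain ⟨hLv, hvL⟩ := abs_le.mp hv
  rcases lt_trichotomy d 0 with hd | rfl | hd
  · have : -v = L := eq_of_forall_step_le (C := C) (neg_pos.mpr hd) (by linarith)
      fun t ht htL => by nlinarith [h (-t) (abs_le.mpr ⟨by linarith, by linarith⟩)]
    rw [abs_of_neg hd, ← this]
    ring
  · simp
  · have : v = L := eq_of_forall_step_le hd hvL fun t ht htL =>
      h t (abs_le.mpr ⟨by linarith, htL⟩)
    rw [abs_of_pos hd, this]

section Duality

variable {n : ℕ} {E : Finset (Fin n × Fin n)} {W : Fin n × Fin n → ℝ} {S : Finset (Fin n)}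
  {α lam : ℝ}

variable (E W S α lam) in
noncomputable def dualityGap (y : Fin n × Fin n → ℝ) (x : Fin n → ℝ) : ℝ :=
  ∑ i ∈ S, (divg E y i + x i - 1) ^ 2 + 1 / α * ∑ i ∈ Sᶜ, (divg E y i + α * x i) ^ 2
    + 2 * ∑ e ∈ E, (lam * W e * |x e.1 - x e.2| - y e * (x e.1 - x e.2))

variable (E W S lam) in
theorem flowCost_divg_eq (hα : α ≠ 0) (y : Fin n × Fin n → ℝ) (x : Fin n → ℝ) :
    flowCost S α (divg E y)
      = S.card - 2 * nLasso E W S α lam x + dualityGap E W S α lam y x := by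
  set u := divg E y
  have hS : ∑ i ∈ S, (u i + x i - 1) ^ 2 = ∑ i ∈ S, (u i - 1) ^ 2 + 2 * ∑ i ∈ S, u i * x i
      - S.card + 2 * ∑ i ∈ S, (x i - 1) ^ 2 / 2 := by
    simp only [card_eq_sum_ones, Nat.cast_sum, Nat.cast_one, mul_sum, ← sum_sub_distrib,
      ← sum_add_distrib]
    exact sum_congr rfl fun i _ => by ring
  have hSc : 1 / α * ∑ i ∈ Sᶜ, (u i + α * x i) ^ 2 = 1 / α * ∑ i ∈ Sᶜ, u i ^ 2
      + 2 * ∑ i ∈ Sᶜ, u i * x i + 2 * ∑ i ∈ Sᶜ, α * x i ^ 2 / 2 := by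
    simp only [mul_sum, ← sum_add_distrib]
    exact sum_congr rfl fun i _ => by field_simp; ring
  have hE : ∑ e ∈ E, (lam * W e * |x e.1 - x e.2| - y e * (x e.1 - x e.2))
      = lam * TV E W x - ∑ e ∈ E, y e * (x e.1 - x e.2) := by
    rw [TV, mul_sum, ← sum_sub_distrib]
    exact sum_congr rfl fun e _ => by ring
  have hdiv : ∑ i ∈ S, u i * x i + ∑ i ∈ Sᶜ, u i * x i = ∑ e ∈ E, y e * (x e.1 - x e.2) := by
    rw [sum_add_sum_compl, sum_divg_mul]
  rw [flowCost, dualityGap, nLasso, hS, hSc, hE]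
  linear_combination -2 * hdiv

variable (S) in
theorem dualityGap_nonneg (hα : 0 ≤ α) {y : Fin n × Fin n → ℝ}
    (hy : y ∈ feasibleFlows E fun e => lam * W e) (x : Fin n → ℝ) :
    0 ≤ dualityGap E W S α lam y x := by
  have hedge : ∀ e ∈ E, 0 ≤ lam * W e * |x e.1 - x e.2| - y e * (x e.1 - x e.2) :=
    fun e he => sub_nonneg.mpr <| calc
      y e * (x e.1 - x e.2) ≤ |y e| * |x e.1 - x e.2| := (le_abs_self _).trans (abs_mul _ _).le
      _ ≤ lam * W e * |x e.1 - x e.2| := mul_le_mul_of_nonneg_right (hy e he) (abs_nonneg _)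
  have := sum_nonneg hedge
  unfold dualityGap
  positivity

variable (S) in
theorem card_sub_two_mul_nLasso_le (hα : 0 < α) {y : Fin n × Fin n → ℝ}
    (hy : y ∈ feasibleFlows E fun e => lam * W e) (x : Fin n → ℝ) :
    S.card - 2 * nLasso E W S α lam x ≤ flowCost S α (divg E y) := by
  rw [flowCost_divg_eq E W S lam hα.ne' y x]
  linarith [dualityGap_nonneg S hα.le hy x]

theorem flow_mul_eq_of_isMinOn {c : Fin n × Fin n → ℝ} {y : Fin n × Fin n → ℝ}
    (hy : y ∈ feasibleFlows E c)
    (hmin : IsMinOn (fun y => flowCost S α (divg E y)) (feasibleFlows E c) y)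
    {e : Fin n × Fin n} (he : e ∈ E) :
    let x := primalOfFlow S α (divg E y)
    y e * (x e.1 - x e.2) = c e * |x e.1 - x e.2| := by
  intro x
  set v := divg E (Pi.single e 1)
  refine mul_eq_mul_abs_of_forall_step_le
    (C := ∑ i ∈ S, v i ^ 2 + 1 / α * ∑ i ∈ Sᶜ, v i ^ 2) (hy e he) fun t ht => ?_
  have hfeas : y + t • Pi.single e 1 ∈ feasibleFlows E c := by
    intro e' he'
    by_cases hee : e' = e
    · subst hee; simpa using ht
    · simpa [hee] using hy e' he'
  have hlin : ∑ i, x i * v i = x e.1 - x e.2 := by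
    simp only [v, mul_comm (x _), sum_divg_mul, Pi.single_apply, ite_mul, one_mul, zero_mul,
      sum_ite_eq', if_pos he]
  have hstep : flowCost S α (divg E y) ≤ flowCost S α (divg E (y + t • Pi.single e 1)) :=
    hmin hfeas
  rw [divg_add_smul, flowCost_add_smul, hlin] at hstep
  linarith

theorem dualityGap_eq_zero_of_isMinOn (hα : α ≠ 0) {y : Fin n × Fin n → ℝ}
    (hy : y ∈ feasibleFlows E fun e => lam * W e)
    (hmin : IsMinOn (fun y => flowCost S α (divg E y)) (feasibleFlows E fun e => lam * W e) y) :
    dualityGap E W S α lam y (primalOfFlow S α (divg E y)) = 0 := by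
  set x := primalOfFlow S α (divg E y)
  have hS : ∀ i ∈ S, (divg E y i + x i - 1) ^ 2 = 0 := fun i hi => by
    simp only [x, primalOfFlow, if_pos hi]; ring
  have hSc : ∀ i ∈ Sᶜ, (divg E y i + α * x i) ^ 2 = 0 := fun i hi => by
    simp only [x, primalOfFlow, if_neg (mem_compl.mp hi)]; field_simp; ring
  have hE : ∀ e ∈ E, lam * W e * |x e.1 - x e.2| - y e * (x e.1 - x e.2) = 0 :=
    fun e he => sub_eq_zero.mpr (flow_mul_eq_of_isMinOn hy hmin he).symm
  rw [dualityGap, sum_eq_zero hS, sum_eq_zero hSc, sum_eq_zero hE]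
  ring

end Duality

theorem augmented_min_cost_flow_value_general
    (n : ℕ) (E : Finset (Fin n × Fin n))
    (W : Fin n × Fin n → ℝ) (hW : ∀ e ∈ E, 0 < W e)
    (S : Finset (Fin n))
    (α lam : ℝ) (hα : 0 < α) (hlam : 0 < lam) :
    ∃ xhat : Fin n → ℝ,
      (∀ z : Fin n → ℝ, nLasso E W S α lam xhat ≤ nLasso E W S α lam z) ∧
      IsLeast
        {t : ℝ | ∃ y : Fin n × Fin n → ℝ, ∃ u : Fin n → ℝ,
          (∀ e ∈ E, |y e| ≤ lam * W e) ∧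
          (∀ i : Fin n, u i = divg E y i) ∧
          t = ∑ i ∈ S, (u i - 1) ^ 2 + (1 / α) * ∑ i ∈ Sᶜ, u i ^ 2}
        ((S.card : ℝ) - 2 * nLasso E W S α lam xhat) := by
  obtain ⟨y, hy, hmin⟩ := exists_isMinOn_feasibleFlows (c := fun e => lam * W e)
    (fun e he => (mul_pos hlam (hW e he)).le) ((continuous_flowCost S α).comp (continuous_divg E))
    fun y y' h => by simp only [Function.comp_apply, divg_congr E h]
  have hval : flowCost S α (divg E y)
      = S.card - 2 * nLasso E W S α lam (primalOfFlow S α (divg E y)) := by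
    rw [flowCost_divg_eq E W S lam hα.ne', dualityGap_eq_zero_of_isMinOn hα.ne' hy hmin, add_zero]
  refine ⟨primalOfFlow S α (divg E y), fun z => ?_, ⟨y, divg E y, hy, fun _ => rfl, hval.symm⟩, ?_⟩
  · linarith [card_sub_two_mul_nLasso_le S hα hy z]
  · rintro t ⟨y', u, hy', hu, rfl⟩
    obtain rfl : u = divg E y' := funext hu
    exact card_sub_two_mul_nLasso_le S hα hy' _

/-- The optimal value of the augmented minimum-cost flow problem equals
`|S| - 2 · (minimum of the nLasso objective h)`. -/
theorem augmented_min_cost_flow_value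
    (n : ℕ) (E : Finset (Fin n × Fin n)) (hE : ∀ e ∈ E, e.1 < e.2)
    (W : Fin n × Fin n → ℝ) (hW : ∀ e ∈ E, 0 < W e)
    (S : Finset (Fin n)) (hS : S.Nonempty)
    (α lam : ℝ) (hα : 0 < α) (hlam : 0 < lam) :
    ∃ xhat : Fin n → ℝ,
      (∀ z : Fin n → ℝ, nLasso E W S α lam xhat ≤ nLasso E W S α lam z) ∧
      IsLeast
        {t : ℝ | ∃ y : Fin n × Fin n → ℝ, ∃ u : Fin n → ℝ,
          (∀ e ∈ E, |y e| ≤ lam * W e) ∧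
          (∀ i : Fin n, u i = divg E y i) ∧
          t = ∑ i ∈ S, (u i - 1) ^ 2 + (1 / α) * ∑ i ∈ Sᶜ, u i ^ 2}
        ((S.card : ℝ) - 2 * nLasso E W S α lam xhat) :=
  augmented_min_cost_flow_value_general n E W hW S α lam hα hlam
end

section
/- Let x̂ minimize the nLasso objective h over ℝ^V, let C = {i ∈ V : x̂_i > 1/2} be the thresholded cluster, and assume S ⊆ C. If U is an upper bound on the number of nodes i ∉ C with x̂_i ≠ 0, i.e. |{i ∈ V∖C : x̂_i ≠ 0}| ≤ U, then λ Σ_{e∈∂C} W_e ≤ U α / 2. -/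
open Finset

open Filter Topology

/-!
Raising `x̂` by a small `t > 0` on every node outside `C` keeps the data term on `S ⊆ C`
unchanged, costs `α t ∑_{i ∉ C} x̂_i + O(t²)` in the `α`-term, and lowers the total variation by
exactly `t ∑_{e ∈ ∂C} W_e`, since every boundary edge joins a node of `C` to a strictly smaller
value outside it. Optimality of `x̂`, divided by `t` and with `t → 0⁺`, gives
`λ ∑_{e ∈ ∂C} W_e ≤ α ∑_{i ∉ C} x̂_i`, and each nonzero summand on the right is at most `1/2`.
-/

theorem le_of_eventually_le_add_mul {a b c : ℝ} (h : ∀ᶠ t in 𝓝[>] (0 : ℝ), a ≤ b + c * t) :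
    a ≤ b := by
  have hlim : Tendsto (fun t => b + c * t) (𝓝 (0 : ℝ)) (𝓝 b) :=
    (by fun_prop : Continuous fun t : ℝ => b + c * t).tendsto' 0 b (by simp)
  exact ge_of_tendsto (tendsto_nhdsWithin_of_tendsto_nhds hlim) h

theorem Finset.sum_le_card_filter_ne_zero_mul {ι : Type*} (s : Finset ι) (f : ι → ℝ) {c : ℝ}
    (hf : ∀ i ∈ s, f i ≤ c) : ∑ i ∈ s, f i ≤ #(s.filter fun i => f i ≠ 0) * c := by
  rw [← sum_filter_ne_zero, ← nsmul_eq_mul]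
  exact sum_le_card_nsmul _ _ _ fun i hi => hf i (mem_filter.mp hi).1

section Perturbation

variable {n : ℕ} (C : Finset (Fin n))

def shiftOutside (x : Fin n → ℝ) (t : ℝ) : Fin n → ℝ :=
  fun i => if i ∈ C then x i else x i + t

variable {C} {x : Fin n → ℝ} {t : ℝ}

theorem abs_sub_shiftOutside (ht : 0 ≤ t) (hgap : ∀ i ∈ C, ∀ j ∉ C, t ≤ x i - x j)
    (i j : Fin n) :
    |shiftOutside C x t i - shiftOutside C x t j|
      = |x i - x j| - if (i ∈ C ∧ j ∉ C) ∨ (i ∉ C ∧ j ∈ C) then t else 0 := by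
  by_cases hi : i ∈ C <;> by_cases hj : j ∈ C <;> simp only [shiftOutside, hi, hj] <;> simp
  · have := hgap i hi j hj
    rw [abs_of_nonneg (by linarith), abs_of_nonneg (by linarith)]
    ring
  · have := hgap j hj i hi
    rw [abs_of_nonpos (by linarith), abs_of_nonpos (by linarith)]
    ring

theorem TV_shiftOutside (E : Finset (Fin n × Fin n)) (W : Fin n × Fin n → ℝ) (ht : 0 ≤ t)
    (hgap : ∀ i ∈ C, ∀ j ∉ C, t ≤ x i - x j) :
    TV E W (shiftOutside C x t) = TV E W x - t * ∑ e ∈ bdry E C, W e := by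
  simp only [TV, abs_sub_shiftOutside ht hgap, mul_sub, sum_sub_distrib, mul_ite, mul_zero,
    ← sum_filter]
  rw [bdry, mul_sum]
  exact congrArg _ (sum_congr rfl fun e _ => mul_comm _ _)

theorem nLasso_shiftOutside (E : Finset (Fin n × Fin n)) (W : Fin n × Fin n → ℝ)
    {S : Finset (Fin n)} (α lam : ℝ) (hSC : S ⊆ C) (ht : 0 ≤ t)
    (hgap : ∀ i ∈ C, ∀ j ∉ C, t ≤ x i - x j) :
    nLasso E W S α lam (shiftOutside C x t)
      = nLasso E W S α lam x + α * t * ∑ i ∈ Cᶜ, x i + α * #Cᶜ / 2 * t ^ 2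
        - lam * t * ∑ e ∈ bdry E C, W e := by
  have hS : ∑ i ∈ S, (shiftOutside C x t i - 1) ^ 2 / 2 = ∑ i ∈ S, (x i - 1) ^ 2 / 2 :=
    sum_congr rfl fun i hi => by simp [shiftOutside, hSC hi]
  have hSc : ∑ i ∈ Sᶜ, α * shiftOutside C x t i ^ 2 / 2
      = ∑ i ∈ Sᶜ, α * x i ^ 2 / 2 + ∑ i ∈ Cᶜ, (α * t * x i + α * t ^ 2 / 2) := by
    have hpoint : ∀ i, α * shiftOutside C x t i ^ 2 / 2
        = α * x i ^ 2 / 2 + if i ∈ C then 0 else α * t * x i + α * t ^ 2 / 2 := by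
      intro i
      by_cases hi : i ∈ C <;> simp only [shiftOutside, hi, if_true, if_false] <;> ring
    rw [sum_congr rfl fun i _ => hpoint i, sum_add_distrib, ← sum_subset
      (compl_subset_compl.mpr hSC) fun i _ hi => if_pos (by simpa using hi)]
    exact congrArg _ (sum_congr rfl fun i hi => by simp [mem_compl.mp hi])
  rw [nLasso, nLasso, hS, hSc, TV_shiftOutside E W ht hgap, sum_add_distrib, ← mul_sum,
    sum_const, nsmul_eq_mul]
  ring

end Perturbation

theorem lam_mul_sum_bdry_le_of_forall_nLasso_le {n : ℕ} {E : Finset (Fin n × Fin n)}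
    {W : Fin n × Fin n → ℝ} {S C : Finset (Fin n)} {α lam : ℝ} {x : Fin n → ℝ}
    (hmin : ∀ z, nLasso E W S α lam x ≤ nLasso E W S α lam z) (hSC : S ⊆ C)
    (hsep : ∀ i ∈ C, ∀ j ∉ C, x j < x i) :
    lam * ∑ e ∈ bdry E C, W e ≤ α * ∑ i ∈ Cᶜ, x i := by
  have hgap : ∀ᶠ t in 𝓝[>] (0 : ℝ), ∀ i ∈ C, ∀ j ∈ Cᶜ, t ≤ x i - x j := by
    simp only [eventually_all_finset]
    intro i hi j hj
    exact nhdsWithin_le_nhds <| (eventually_lt_nhds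
      (sub_pos.mpr (hsep i hi j (mem_compl.mp hj)))).mono fun _ => le_of_lt
  refine le_of_eventually_le_add_mul (c := α * #Cᶜ / 2) ?_
  filter_upwards [eventually_mem_nhdsWithin, hgap] with t (ht : 0 < t) hgap
  have hopt := hmin (shiftOutside C x t)
  rw [nLasso_shiftOutside E W α lam hSC ht.le fun i hi j hj => hgap i hi j (mem_compl.mpr hj)]
    at hopt
  refine le_of_mul_le_mul_left ?_ ht
  linarith

theorem weighted_boundary_le_U_alpha_half_general
    (n : ℕ) (E : Finset (Fin n × Fin n))
    (W : Fin n × Fin n → ℝ)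
    (S : Finset (Fin n))
    (α lam : ℝ) (hα : 0 < α)
    (xhat : Fin n → ℝ)
    (hprimal : ∀ z : Fin n → ℝ, nLasso E W S α lam xhat ≤ nLasso E W S α lam z)
    (C : Finset (Fin n)) (hC : C = Finset.univ.filter (fun i => 1 / 2 < xhat i))
    (hSC : S ⊆ C)
    (U : ℝ) (hU : ((Cᶜ.filter (fun i => xhat i ≠ 0)).card : ℝ) ≤ U) :
    lam * ∑ e ∈ bdry E C, W e ≤ U * α / 2 := by
  have hmem : ∀ i, i ∈ C ↔ 1 / 2 < xhat i := by simp [hC]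
  have hout : ∀ i ∈ Cᶜ, xhat i ≤ 1 / 2 := fun i hi =>
    not_lt.mp ((hmem i).not.mp (mem_compl.mp hi))
  have hsep : ∀ i ∈ C, ∀ j ∉ C, xhat j < xhat i := fun i hi j hj =>
    (hout j (mem_compl.mpr hj)).trans_lt ((hmem i).mp hi)
  calc lam * ∑ e ∈ bdry E C, W e ≤ α * ∑ i ∈ Cᶜ, xhat i :=
        lam_mul_sum_bdry_le_of_forall_nLasso_le hprimal hSC hsep
    _ ≤ α * (#(Cᶜ.filter fun i => xhat i ≠ 0) * (1 / 2)) :=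
        mul_le_mul_of_nonneg_left (sum_le_card_filter_ne_zero_mul _ _ hout) hα.le
    _ ≤ U * α / 2 := by nlinarith

/-- If at most `U` nodes outside the thresholded cluster `C` carry a nonzero
value of the nLasso minimizer `x̂`, then `λ ∑_{e∈∂C} W_e ≤ U α / 2`. -/
theorem weighted_boundary_le_U_alpha_half
    (n : ℕ) (E : Finset (Fin n × Fin n)) (hE : ∀ e ∈ E, e.1 < e.2)
    (W : Fin n × Fin n → ℝ) (hW : ∀ e ∈ E, 0 < W e)
    (S : Finset (Fin n)) (hS : S.Nonempty)
    (α lam : ℝ) (hα : 0 < α) (hlam : 0 < lam)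
    (xhat : Fin n → ℝ)
    (hprimal : ∀ z : Fin n → ℝ, nLasso E W S α lam xhat ≤ nLasso E W S α lam z)
    (C : Finset (Fin n)) (hC : C = Finset.univ.filter (fun i => 1 / 2 < xhat i))
    (hSC : S ⊆ C)
    (U : ℝ) (hU : ((Cᶜ.filter (fun i => xhat i ≠ 0)).card : ℝ) ≤ U) :
    lam * ∑ e ∈ bdry E C, W e ≤ U * α / 2 :=
  weighted_boundary_le_U_alpha_half_general n E W S α lam hα xhat hprimal C hC hSC U hU
end
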